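/- A nontrivial protoalgebraic logic ⊢ has an algebraic semantics if and only if there exist two distinct formulas ε and δ that are logically equivalent in ⊢ (i.e., δ'(ε, z⃗) ⊣⊢ δ'(δ, z⃗) for every formula δ'(x, z⃗)). -/

import Mathlib

/-- An algebraic signature: a type of operation symbols with arities. -/
structure Sig : Type 1 where
  Op : Type
  ar : Op → ℕ

/-- Formulas (terms) over a signature, with variables indexed by ℕ. -/
inductive Fm (L : Sig) : Type where
  | var : ℕ → Fm L
  | op : (f : L.Op) → (Fin (L.ar f) → Fm L) → Fm L

/-- An algebra for the signature `L`. -/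
structure Alg (L : Sig) : Type 1 where
  carrier : Type
  interp : (f : L.Op) → (Fin (L.ar f) → carrier) → carrier

/-- Evaluation of a formula in an algebra under a valuation of the variables. -/
def Fm.eval {L : Sig} (A : Alg L) (v : ℕ → A.carrier) : Fm L → A.carrier
  | .var n => v n
  | .op f as => A.interp f (fun i => (as i).eval A v)

/-- Substitution (endomorphism of the formula algebra). -/
def Fm.subst {L : Sig} (σ : ℕ → Fm L) : Fm L → Fm L
  | .var n => σ n
  | .op f as => .op f (fun i => (as i).subst σ)

/-- The set of variables occurring in a formula. -/
def Fm.vars {L : Sig} : Fm L → Set ℕ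
  | .var n => {n}
  | .op _ as => ⋃ i, (as i).vars

/-- Substitute the formula `ψ` for the variable `v` in `φ`. -/
def Fm.subst1 {L : Sig} (v : ℕ) (ψ : Fm L) (φ : Fm L) : Fm L :=
  φ.subst (fun n => if n = v then ψ else .var n)

/-- A logic: a substitution-invariant (finitary or not) consequence relation on formulas. -/
structure Logic (L : Sig) : Type where
  deriv : Set (Fm L) → Fm L → Prop
  axm : ∀ Γ φ, φ ∈ Γ → deriv Γ φ
  mono : ∀ Γ Δ φ, Γ ⊆ Δ → deriv Γ φ → deriv Δ φ
  cut : ∀ Γ Δ φ, deriv Γ φ → (∀ γ ∈ Γ, deriv Δ γ) → deriv Δ φ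
  substInv : ∀ (σ : ℕ → Fm L) Γ φ, deriv Γ φ → deriv (Fm.subst σ '' Γ) (φ.subst σ)

/-- A logical matrix: an algebra with a set of designated elements. -/
structure LMatrix (L : Sig) : Type 1 where
  alg : Alg L
  F : Set alg.carrier

/-- The consequence relation induced by a class of matrices. -/
def inducedBy {L : Sig} (M : Set (LMatrix L)) (Γ : Set (Fm L)) (φ : Fm L) : Prop :=
  ∀ m ∈ M, ∀ v : ℕ → m.alg.carrier,
    (∀ γ ∈ Γ, γ.eval m.alg v ∈ m.F) → φ.eval m.alg v ∈ m.F

/-- `M` is a matrix semantics for the logic `ℒ`. -/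
def IsMatrixSemantics {L : Sig} (ℒ : Logic L) (M : Set (LMatrix L)) : Prop :=
  ∀ Γ φ, ℒ.deriv Γ φ ↔ inducedBy M Γ φ

/-- Equational consequence relative to a class of algebras (equations as pairs of formulas). -/
def eqConseq {L : Sig} (K : Set (Alg L)) (Θ : Set (Fm L × Fm L)) (e : Fm L × Fm L) : Prop :=
  ∀ A ∈ K, ∀ v : ℕ → A.carrier,
    (∀ p ∈ Θ, p.1.eval A v = p.2.eval A v) → e.1.eval A v = e.2.eval A v

/-- `τ(φ)`: the result of substituting `φ` for the variable `x` (= variable 0) in each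
equation of `τ`. -/
def tauApp {L : Sig} (τ : Set (Fm L × Fm L)) (φ : Fm L) : Set (Fm L × Fm L) :=
  (fun e => (Fm.subst1 0 φ e.1, Fm.subst1 0 φ e.2)) '' τ

/-- `τ[Γ]`. -/
def tauAppSet {L : Sig} (τ : Set (Fm L × Fm L)) (Γ : Set (Fm L)) : Set (Fm L × Fm L) :=
  ⋃ γ ∈ Γ, tauApp τ γ

/-- `τ` is a set of equations in the single variable `x` (= variable 0). -/
def IsUnivalent {L : Sig} (τ : Set (Fm L × Fm L)) : Prop :=
  ∀ e ∈ τ, e.1.vars ⊆ ({0} : Set ℕ) ∧ e.2.vars ⊆ ({0} : Set ℕ)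

/-- `K` is a `τ`-algebraic semantics for `ℒ`: `Γ ⊢ φ` iff `τ[Γ] ⊨_K τ(φ)`. -/
def IsTauAlgSem {L : Sig} (ℒ : Logic L) (τ : Set (Fm L × Fm L)) (K : Set (Alg L)) : Prop :=
  IsUnivalent τ ∧ ∀ Γ φ, ℒ.deriv Γ φ ↔ ∀ e ∈ tauApp τ φ, eqConseq K (tauAppSet τ Γ) e

/-- `ℒ` has an algebraic semantics (admits an equational completeness theorem). -/
def HasAlgSem {L : Sig} (ℒ : Logic L) : Prop :=
  ∃ (τ : Set (Fm L × Fm L)) (K : Set (Alg L)), IsTauAlgSem ℒ τ K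

/-- `θ` is a congruence of the algebra `A`. -/
def IsCong {L : Sig} (A : Alg L) (θ : A.carrier → A.carrier → Prop) : Prop :=
  Equivalence θ ∧ ∀ (f : L.Op) (as bs : Fin (L.ar f) → A.carrier),
    (∀ i, θ (as i) (bs i)) → θ (A.interp f as) (A.interp f bs)

/-- The congruence of `A` generated by `X` (least congruence containing `X`). -/
def congGen {L : Sig} (A : Alg L) (X : Set (A.carrier × A.carrier))
    (a c : A.carrier) : Prop :=
  ∀ θ, IsCong A θ → (∀ p ∈ X, θ p.1 p.2) → θ a c

/-- `p` is a unary polynomial function of `A`: `p(a) = φ^A(a, c⃗)` for a formula `φ(x, y⃗)`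
and parameters `c⃗` from `A`. -/
def IsUnaryPoly {L : Sig} (A : Alg L) (p : A.carrier → A.carrier) : Prop :=
  ∃ (φ : Fm L) (c : ℕ → A.carrier),
    ∀ a, p a = φ.eval A (fun n => if n = 0 then a else c n)

/-- Compatibility of a relation with a set. -/
def Compatible {L : Sig} (A : Alg L) (θ : A.carrier → A.carrier → Prop)
    (F : Set A.carrier) : Prop :=
  ∀ a c, θ a c → a ∈ F → c ∈ F

/-- The Leibniz congruence `Ω^A F`: the largest congruence of `A` compatible with `F`
(realized as the union of all congruences compatible with `F`). -/
def leibniz {L : Sig} (A : Alg L) (F : Set A.carrier) (a c : A.carrier) : Prop :=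
  ∃ θ, IsCong A θ ∧ Compatible A θ F ∧ θ a c

/-- The formula algebra. -/
def FmAlg (L : Sig) : Alg L :=
  ⟨Fm L, fun f as => Fm.op f as⟩

/-- `ℒ` has no theorems. -/
def LacksTheorems {L : Sig} (ℒ : Logic L) : Prop :=
  ¬ ∃ φ, ℒ.deriv ∅ φ

/-- `ℒ` is assertional. -/
def Assertional {L : Sig} (ℒ : Logic L) : Prop :=
  ∃ (M : Set (LMatrix L)) (φ : Fm L), IsMatrixSemantics ℒ M ∧ φ.vars ⊆ ({0} : Set ℕ) ∧
    ∀ m ∈ M, ∃ c : m.alg.carrier,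
      (∀ a : m.alg.carrier, φ.eval m.alg (fun _ => a) = c) ∧ m.F = {c}

/-- `ℒ` is almost assertional. -/
def AlmostAssertional {L : Sig} (ℒ : Logic L) : Prop :=
  LacksTheorems ℒ ∧
  ∃ (M : Set (LMatrix L)) (φ : Fm L), IsMatrixSemantics ℒ M ∧ φ.vars ⊆ ({0} : Set ℕ) ∧
    ∀ m ∈ M, m.F.Nonempty → ∃ c : m.alg.carrier,
      (∀ a : m.alg.carrier, φ.eval m.alg (fun _ => a) = c) ∧ m.F = {c}

/-- Two formulas are logically equivalent in `ℒ`. -/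
def LogEquiv {L : Sig} (ℒ : Logic L) (ε δ : Fm L) : Prop :=
  ∀ (φ : Fm L) (v : ℕ),
    ℒ.deriv {Fm.subst1 v ε φ} (Fm.subst1 v δ φ) ∧
    ℒ.deriv {Fm.subst1 v δ φ} (Fm.subst1 v ε φ)

/-- `ℒ` is protoalgebraic: there is a set of formulas `Δ(x, y)` with `∅ ⊢ Δ(x, x)` and
`x, Δ(x, y) ⊢ y`. -/
def Protoalgebraic {L : Sig} (ℒ : Logic L) : Prop :=
  ∃ Δ : Set (Fm L), (∀ ψ ∈ Δ, ψ.vars ⊆ ({0, 1} : Set ℕ)) ∧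
    (∀ ψ ∈ Δ, ℒ.deriv ∅ (Fm.subst1 1 (Fm.var 0) ψ)) ∧
    ℒ.deriv ({Fm.var 0} ∪ Δ) (Fm.var 1)

/-- `ℒ` is nontrivial: `x ⊬ y`. -/
def NontrivialLogic {L : Sig} (ℒ : Logic L) : Prop :=
  ¬ ℒ.deriv {Fm.var 0} (Fm.var 1)

/-!
Necessity: some defining equation `p ≈ q` of `τ` has `p ≠ q`, since `x ⊬ y`, and
protoalgebraicity provides a theorem `θ` containing a variable. As `∅ ⊢ θ`, the class `K`
validates `p(θ) ≈ q(θ)`, hence every equation `φ(p(θ)) ≈ φ(q(θ))`, so `p(θ)` and `q(θ)` are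
logically equivalent; they are distinct because `p(X) = q(X)` forces `X` to be
variable-free.

Sufficiency: a substitution turns the two formulas into distinct logically equivalent unary
formulas `e`, `d`. Using a connective `f` of arity at least two, put `M = f(e, d, d, …)`,
`M' = f(d, e, d, …)`, let `B` be a full `f`-tree over `x` of height `|M|`, and
`P = f(B, M(B), M(B), …)`, `Q = f(B, M'(B), M(B), …)`. Then `P` and `Q` are logically
equivalent, `c ↦ P(c)` is injective, and, by counting sizes, no instance of `Q` and no instance
of a subformula met while building `P` or `Q` is an instance of `P`. So in the algebra of
formulas whose operations rewrite `P(c)` to `Q(c)` for `c` in a theory `T`, the equation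
`Q(b) = P(b)` holds exactly when `b ∈ T`, while evaluation stays logically equivalent to
substitution. Hence `τ = {Q ≈ P}`, together with these algebras for all theories `T`, is an
algebraic semantics.
-/

namespace Fm

variable {L : Sig} {g : L.Op}

def size : Fm L → ℕ
  | var _ => 1
  | op _ as => 1 + ∑ i, (as i).size

def varOccs : Fm L → ℕ
  | var _ => 1
  | op _ as => ∑ i, (as i).varOccs

/-- `t(X)` for a unary formula `t`: every variable is replaced by `X`. -/
def substConst (t X : Fm L) : Fm L :=
  t.subst fun _ => X

theorem subst_congr {σ ρ : ℕ → Fm L} : ∀ (t : Fm L), (∀ n ∈ t.vars, σ n = ρ n) →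
    t.subst σ = t.subst ρ
  | var n, h => h n rfl
  | op g as, h => by
    simp only [subst, op.injEq, heq_eq_eq, true_and]
    exact funext fun i => subst_congr (as i) fun n hn => h n (Set.mem_iUnion.2 ⟨i, hn⟩)

theorem subst_subst (σ ρ : ℕ → Fm L) : ∀ (t : Fm L),
    (t.subst σ).subst ρ = t.subst fun n => (σ n).subst ρ
  | var _ => rfl
  | op g as => by
    simp only [subst, op.injEq, heq_eq_eq, true_and]
    exact funext fun i => subst_subst σ ρ (as i)

theorem subst_var : ∀ (t : Fm L), t.subst var = t
  | var _ => rfl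
  | op g as => by
    simp only [subst, op.injEq, heq_eq_eq, true_and]
    exact funext fun i => subst_var (as i)

theorem subst_eq_self {σ : ℕ → Fm L} {t : Fm L} (h : ∀ n ∈ t.vars, σ n = var n) :
    t.subst σ = t :=
  (subst_congr t h).trans (subst_var t)

theorem eval_subst (A : Alg L) (w : ℕ → A.carrier) (σ : ℕ → Fm L) : ∀ (t : Fm L),
    (t.subst σ).eval A w = t.eval A fun n => (σ n).eval A w
  | var _ => rfl
  | op g as => by
    simp only [subst, eval]
    exact congrArg _ (funext fun i => eval_subst A w σ (as i))

theorem eval_congr (A : Alg L) {v w : ℕ → A.carrier} : ∀ (t : Fm L),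
    (∀ n ∈ t.vars, v n = w n) → t.eval A v = t.eval A w
  | var n, h => h n rfl
  | op g as, h => by
    simp only [eval]
    exact congrArg _ (funext fun i =>
      eval_congr A (as i) fun n hn => h n (Set.mem_iUnion.2 ⟨i, hn⟩))

theorem mem_vars_subst {σ : ℕ → Fm L} {k : ℕ} : ∀ {t : Fm L},
    k ∈ (t.subst σ).vars ↔ ∃ n ∈ t.vars, k ∈ (σ n).vars
  | var n => by simp [subst, vars]
  | op g as => by
    simp only [subst, vars, Set.mem_iUnion]
    constructor
    · rintro ⟨i, hi⟩
      obtain ⟨n, hn, hk⟩ := mem_vars_subst.1 hi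
      exact ⟨n, ⟨i, hn⟩, hk⟩
    · rintro ⟨n, ⟨i, hn⟩, hk⟩
      exact ⟨i, mem_vars_subst.2 ⟨n, hn, hk⟩⟩

theorem vars_subst_subset {σ : ℕ → Fm L} {S : Set ℕ} (hσ : ∀ n, (σ n).vars ⊆ S)
    (t : Fm L) : (t.subst σ).vars ⊆ S := fun _ hk =>
  have ⟨n, _, hk⟩ := mem_vars_subst.1 hk
  hσ n hk

theorem vars_finite : ∀ (t : Fm L), t.vars.Finite
  | var _ => Set.finite_singleton _
  | op _ as => Set.finite_iUnion fun i => vars_finite (as i)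

theorem vars_subsingleton (hL : ∀ g : L.Op, L.ar g < 2) : ∀ (t : Fm L), t.vars.Subsingleton
  | var _ => Set.subsingleton_singleton
  | op g as => by
    intro x hx y hy
    obtain ⟨i, hi⟩ := Set.mem_iUnion.1 hx
    obtain ⟨j, hj⟩ := Set.mem_iUnion.1 hy
    obtain rfl : i = j := Fin.ext (by have := hL g; omega)
    exact vars_subsingleton hL (as i) hi hj

theorem subst1_var_self (v : ℕ) (X : Fm L) : subst1 v X (var v) = X := by
  simp [subst1, subst]

theorem subst1_op (v : ℕ) (X : Fm L) (as : Fin (L.ar g) → Fm L) :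
    subst1 v X (op g as) = op g fun i => subst1 v X (as i) := rfl

theorem subst1_eq_self {v : ℕ} {t : Fm L} (h : v ∉ t.vars) (X : Fm L) : subst1 v X t = t :=
  subst_eq_self fun n hn => if_neg fun hnv : n = v => h (hnv ▸ hn)

theorem subst1_subst1 {φ : Fm L} {w : ℕ} (hw : w ∉ φ.vars) (v : ℕ) (X Y : Fm L) :
    subst1 w X (subst1 v Y φ) = subst1 v (subst1 w X Y) φ := by
  simp only [subst1, subst_subst]
  refine subst_congr φ fun n hn => ?_
  split_ifs with hnv
  · rfl
  · exact if_neg fun hnw : n = w => hw (hnw ▸ hn)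

theorem eval_subst1 (A : Alg L) (w : ℕ → A.carrier) (v : ℕ) (X t : Fm L) :
    (subst1 v X t).eval A w = t.eval A (Function.update w v (X.eval A w)) := by
  rw [subst1, eval_subst]
  congr 1
  funext n
  by_cases h : n = v <;> simp [h, eval]

theorem eval_subst1_congr (A : Alg L) {w : ℕ → A.carrier} {X Y : Fm L}
    (h : X.eval A w = Y.eval A w) (v : ℕ) (t : Fm L) :
    (subst1 v X t).eval A w = (subst1 v Y t).eval A w := by
  rw [eval_subst1, eval_subst1, h]

theorem subst1_eq_substConst {t : Fm L} {v : ℕ} (ht : t.vars ⊆ {v}) (X : Fm L) :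
    subst1 v X t = t.substConst X :=
  subst_congr t fun _ hn => if_pos (ht hn)

theorem substConst_op (as : Fin (L.ar g) → Fm L) (X : Fm L) :
    (op g as).substConst X = op g fun i => (as i).substConst X := rfl

theorem substConst_substConst (t X Y : Fm L) :
    (t.substConst X).substConst Y = t.substConst (X.substConst Y) :=
  subst_subst _ _ t

theorem vars_substConst_subset (t X : Fm L) : (t.substConst X).vars ⊆ X.vars := fun _ hk =>
  have ⟨_, _, hk⟩ := mem_vars_subst.1 hk
  hk

theorem substConst_eq_self {t : Fm L} (h : t.vars = ∅) (X : Fm L) : t.substConst X = t :=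
  subst_eq_self fun n hn => absurd (h ▸ hn) (Set.notMem_empty n)

theorem eval_subst1_of_vars_subset {t : Fm L} {v : ℕ} (ht : t.vars ⊆ {v}) (A : Alg L)
    (w : ℕ → A.carrier) (X : Fm L) :
    (subst1 v X t).eval A w = t.eval A fun _ => X.eval A w := by
  rw [eval_subst1]
  exact eval_congr A t fun n hn => by rw [Set.mem_singleton_iff.1 (ht hn), Function.update_self]

theorem vars_subset_vars_op (as : Fin (L.ar g) → Fm L) (i : Fin (L.ar g)) :
    (as i).vars ⊆ (op g as).vars :=
  fun _ hn => Set.mem_iUnion.2 ⟨i, hn⟩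

theorem one_le_size : ∀ (t : Fm L), 1 ≤ t.size
  | var _ => le_rfl
  | op _ _ => Nat.le_add_right 1 _

theorem size_lt_size_op (as : Fin (L.ar g) → Fm L) (i : Fin (L.ar g)) :
    (as i).size < (op g as).size :=
  Nat.lt_one_add_iff.2 (Finset.single_le_sum (fun j _ => Nat.zero_le (as j).size)
    (Finset.mem_univ i))

theorem varOccs_le_varOccs_op (as : Fin (L.ar g) → Fm L) (i : Fin (L.ar g)) :
    (as i).varOccs ≤ (op g as).varOccs :=
  Finset.single_le_sum (fun j _ => Nat.zero_le (as j).varOccs) (Finset.mem_univ i)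

theorem varOccs_le_size : ∀ (t : Fm L), t.varOccs ≤ t.size
  | var _ => le_rfl
  | op _ as => (Finset.sum_le_sum fun i _ => varOccs_le_size (as i)).trans (Nat.le_add_left _ 1)

theorem varOccs_lt_size_op (as : Fin (L.ar g) → Fm L) : (op g as).varOccs < (op g as).size :=
  Nat.lt_one_add_iff.2 (Finset.sum_le_sum fun i _ => varOccs_le_size (as i))

theorem varOccs_eq_zero_iff : ∀ {t : Fm L}, t.varOccs = 0 ↔ t.vars = ∅
  | var n => by simp [varOccs, vars]
  | op g as => by
    simp only [varOccs, vars, Finset.sum_eq_zero_iff, Finset.mem_univ, true_implies,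
      Set.iUnion_eq_empty]
    exact forall_congr' fun i => varOccs_eq_zero_iff

theorem size_substConst (X : Fm L) : ∀ (t : Fm L),
    (t.substConst X).size + t.varOccs = t.size + t.varOccs * X.size
  | var _ => by simp [substConst, subst, size, varOccs, add_comm]
  | op g as => by
    have ih := fun i => size_substConst X (as i)
    simp only [substConst_op, size, varOccs, Finset.sum_mul] at ih ⊢
    rw [add_assoc, ← Finset.sum_add_distrib, Finset.sum_congr rfl fun i _ => ih i,
      Finset.sum_add_distrib, add_assoc]

theorem size_le_size_substConst {t : Fm L} (ht : t.varOccs ≠ 0) (X : Fm L) :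
    X.size ≤ (t.substConst X).size := by
  nlinarith [size_substConst X t, varOccs_le_size t, Nat.pos_of_ne_zero ht, one_le_size X]

theorem eq_of_substConst_op_eq_self {as : Fin (L.ar g) → Fm L} {X : Fm L}
    (h : (op g as).substConst X = X) : (op g as).vars = ∅ ∧ X = op g as := by
  by_cases h0 : (op g as).varOccs = 0
  · have hv := varOccs_eq_zero_iff.1 h0
    exact ⟨hv, h.symm.trans (substConst_eq_self hv X)⟩
  · have hsize := size_substConst X (op g as)
    rw [h] at hsize
    nlinarith [varOccs_lt_size_op as, one_le_size X, Nat.pos_of_ne_zero h0]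

theorem vars_eq_empty_and_size_le_of_substConst_eq {X : Fm L} :
    ∀ {e d : Fm L}, e.vars ⊆ {0} → d.vars ⊆ {0} → e ≠ d →
      e.substConst X = d.substConst X → X.vars = ∅ ∧ X.size ≤ max e.size d.size
  | var a, var b, he, hd, hne, _ => absurd (by rw [he rfl, hd rfl]) hne
  | var _, op g bs, _, _, _, h => by
    obtain ⟨hv, rfl⟩ := eq_of_substConst_op_eq_self h.symm
    exact ⟨hv, le_max_right _ _⟩
  | op g as, var _, _, _, _, h => by
    obtain ⟨hv, rfl⟩ := eq_of_substConst_op_eq_self h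
    exact ⟨hv, le_max_left _ _⟩
  | op g as, op g' bs, he, hd, hne, h => by
    simp only [substConst_op, op.injEq] at h
    obtain ⟨rfl, h⟩ := h
    obtain ⟨i, hi⟩ : ∃ i, as i ≠ bs i := Function.ne_iff.1 fun hab => hne (hab ▸ rfl)
    obtain ⟨hv, hs⟩ := vars_eq_empty_and_size_le_of_substConst_eq
      ((vars_subset_vars_op as i).trans he) ((vars_subset_vars_op bs i).trans hd) hi
      (congrFun (eq_of_heq h) i)
    exact ⟨hv, hs.trans (max_le_max (size_lt_size_op as i).le (size_lt_size_op bs i).le)⟩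

theorem exists_subst_ne {t : Fm L} (ht : t ≠ var 0) : ∀ {a b : Fm L}, a ≠ b →
    ∃ m, a.subst (fun n => if n = m then t else var 0) ≠
      b.subst (fun n => if n = m then t else var 0)
  | var a, var b, hab => ⟨a, by simpa [subst, Ne.symm (mt (congrArg var) hab)] using ht⟩
  | var a, op _ _, _ => ⟨a + 1, by simp [subst]⟩
  | op _ _, var b, _ => ⟨b + 1, by simp [subst]⟩
  | op g as, op g' bs, hab => by
    by_cases hg : g = g'
    · subst hg
      obtain ⟨i, hi⟩ : ∃ i, as i ≠ bs i := Function.ne_iff.1 fun h => hab (h ▸ rfl)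
      obtain ⟨m, hm⟩ := exists_subst_ne ht hi
      refine ⟨m, fun h => hm ?_⟩
      simp only [subst, op.injEq, heq_eq_eq, true_and] at h
      exact congrFun h i
    · exact ⟨0, by simp [subst, hg]⟩

end Fm

namespace Logic

variable {L : Sig}

def IsTheory (ℒ : Logic L) (T : Set (Fm L)) : Prop :=
  ∀ φ, ℒ.deriv T φ → φ ∈ T

theorem deriv.trans {ℒ : Logic L} {Γ : Set (Fm L)} {a b : Fm L} (ha : ℒ.deriv Γ a)
    (hab : ℒ.deriv {a} b) : ℒ.deriv Γ b :=
  ℒ.cut {a} Γ b hab fun _ hγ => (Set.mem_singleton_iff.1 hγ) ▸ ha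

end Logic

namespace LogEquiv

variable {L : Sig} {ℒ : Logic L} {a b c : Fm L}

theorem refl (a : Fm L) : LogEquiv ℒ a a :=
  fun _ _ => ⟨ℒ.axm _ _ rfl, ℒ.axm _ _ rfl⟩

theorem symm (h : LogEquiv ℒ a b) : LogEquiv ℒ b a :=
  fun φ v => (h φ v).symm

theorem trans (hab : LogEquiv ℒ a b) (hbc : LogEquiv ℒ b c) : LogEquiv ℒ a c :=
  fun φ v => ⟨(hab φ v).1.trans (hbc φ v).1, (hbc φ v).2.trans (hab φ v).2⟩

theorem deriv (h : LogEquiv ℒ a b) : ℒ.deriv {a} b := by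
  simpa only [Fm.subst1_var_self] using (h (.var 0) 0).1

theorem subst1 (h : LogEquiv ℒ a b) (w : ℕ) (C : Fm L) :
    LogEquiv ℒ (Fm.subst1 w a C) (Fm.subst1 w b C) := by
  intro φ v
  obtain ⟨w', hw'⟩ := (φ.vars_finite.union C.vars_finite).exists_notMem
  rw [Set.mem_union, not_or] at hw'
  have key : ∀ X, Fm.subst1 v (Fm.subst1 w X C) φ =
      Fm.subst1 w' X (Fm.subst1 v (Fm.subst1 w (.var w') C) φ) := fun X => by
    rw [Fm.subst1_subst1 hw'.1, Fm.subst1_subst1 hw'.2, Fm.subst1_var_self]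
  rw [key a, key b]
  exact h _ w'

theorem subst (h : LogEquiv ℒ a b) (σ : ℕ → Fm L) :
    LogEquiv ℒ (a.subst σ) (b.subst σ) := by
  intro φ v
  obtain ⟨N, hN⟩ := (a.vars_finite.union b.vars_finite).bddAbove
  -- rename `v` to `0` and move the other variables of `φ` above those of `a` and `b`
  let ψ := φ.subst fun n => if n = v then .var 0 else .var (n + N + 1)
  let ρ : ℕ → Fm L := fun n => if n ≤ N then σ n else .var (n - (N + 1))
  have key : ∀ X : Fm L, (∀ n ∈ X.vars, n ≤ N) →
      (Fm.subst1 0 X ψ).subst ρ = Fm.subst1 v (X.subst σ) φ := by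
    intro X hX
    simp only [ψ, Fm.subst1, Fm.subst_subst]
    congr 1
    funext n
    split_ifs with hn
    · exact Fm.subst_congr X fun k hk => if_pos (hX k hk)
    · simp [Fm.subst, ρ]
  have transfer : ∀ {X Y : Fm L}, (∀ n ∈ X.vars, n ≤ N) → (∀ n ∈ Y.vars, n ≤ N) →
      ℒ.deriv {Fm.subst1 0 X ψ} (Fm.subst1 0 Y ψ) →
      ℒ.deriv {Fm.subst1 v (X.subst σ) φ} (Fm.subst1 v (Y.subst σ) φ) := by
    intro X Y hX hY hXY
    rw [← key X hX, ← key Y hY]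
    simpa using ℒ.substInv ρ _ _ hXY
  have ha : ∀ n ∈ a.vars, n ≤ N := fun n hn => hN (Or.inl hn)
  have hb : ∀ n ∈ b.vars, n ≤ N := fun n hn => hN (Or.inr hn)
  exact ⟨transfer ha hb (h ψ 0).1, transfer hb ha (h ψ 0).2⟩

theorem op_update (h : LogEquiv ℒ a b) (g : L.Op) (cs : Fin (L.ar g) → Fm L)
    (i : Fin (L.ar g)) :
    LogEquiv ℒ (.op g (Function.update cs i a)) (.op g (Function.update cs i b)) := by
  obtain ⟨w, hw⟩ := (Fm.op g cs).vars_finite.exists_notMem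
  have key : ∀ X, Fm.subst1 w X (.op g (Function.update cs i (.var w))) =
      .op g (Function.update cs i X) := by
    intro X
    rw [Fm.subst1_op]
    congr 1
    funext j
    rcases eq_or_ne j i with rfl | hj
    · simp [Fm.subst1_var_self]
    · simp only [Function.update_of_ne hj]
      exact Fm.subst1_eq_self (fun hm => hw (Fm.vars_subset_vars_op cs j hm)) X
  simpa only [key] using h.subst1 w (.op g (Function.update cs i (.var w)))

theorem op {g : L.Op} {as bs : Fin (L.ar g) → Fm L} (h : ∀ i, LogEquiv ℒ (as i) (bs i)) :
    LogEquiv ℒ (.op g as) (.op g bs) := by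
  classical
  suffices ∀ s : Finset (Fin (L.ar g)), LogEquiv ℒ (.op g as) (.op g (s.piecewise bs as)) by
    simpa using this Finset.univ
  intro s
  induction s using Finset.induction_on with
  | empty => simpa using refl _
  | insert j s hj ih =>
    have step := (h j).op_update g (s.piecewise bs as) j
    rw [← Finset.piecewise_eq_of_notMem s bs as hj, Function.update_eq_self] at step
    rw [Finset.piecewise_insert]
    exact ih.trans step

end LogEquiv

theorem Logic.IsTheory.mem_of_logEquiv {L : Sig} {ℒ : Logic L} {T : Set (Fm L)} {a b : Fm L}
    (hT : ℒ.IsTheory T) (h : LogEquiv ℒ a b) (ha : a ∈ T) : b ∈ T :=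
  hT b ((ℒ.axm T a ha).trans h.deriv)

section Protoalgebraic

variable {L : Sig} {ℒ : Logic L}

theorem exists_not_deriv_empty_of_nontrivial (hnt : NontrivialLogic ℒ) {Δ : Set (Fm L)}
    (hmp : ℒ.deriv ({Fm.var 0} ∪ Δ) (Fm.var 1)) : ∃ ψ ∈ Δ, ¬ ℒ.deriv ∅ ψ := by
  by_contra! hΔ
  refine hnt (ℒ.cut _ _ _ hmp ?_)
  rintro γ (hγ | hγ)
  · exact ℒ.axm _ _ hγ
  · exact ℒ.mono ∅ _ γ (Set.empty_subset _) (hΔ γ hγ)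

theorem deriv_substConst_of_deriv_subst1 {ψ : Fm L}
    (hψ : ℒ.deriv ∅ (Fm.subst1 1 (.var 0) ψ)) (X : Fm L) :
    ℒ.deriv ∅ (ψ.substConst X) := by
  convert ℒ.substInv (fun _ => X) ∅ _ hψ using 1
  · simp
  · simp only [Fm.substConst, Fm.subst1, Fm.subst_subst]
    congr 1
    funext n
    split_ifs <;> rfl

theorem Protoalgebraic.exists_deriv_vars_nonempty (hnt : NontrivialLogic ℒ)
    (hproto : Protoalgebraic ℒ) : ∃ θ : Fm L, ℒ.deriv ∅ θ ∧ θ.vars.Nonempty := by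
  obtain ⟨Δ, -, hthm, hmp⟩ := hproto
  obtain ⟨ψ, hψ, hnot⟩ := exists_not_deriv_empty_of_nontrivial hnt hmp
  have hψ' := deriv_substConst_of_deriv_subst1 (hthm ψ hψ)
  obtain ⟨n, hn⟩ : ψ.vars.Nonempty := by
    rw [Set.nonempty_iff_ne_empty]
    intro hv
    exact hnot (Fm.substConst_eq_self hv (.var 0) ▸ hψ' (.var 0))
  exact ⟨ψ.substConst (.var 0), hψ' _, 0, Fm.mem_vars_subst.2 ⟨n, hn, rfl⟩⟩

theorem Protoalgebraic.exists_two_le_ar (hnt : NontrivialLogic ℒ) (hproto : Protoalgebraic ℒ) :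
    ∃ f : L.Op, 2 ≤ L.ar f := by
  obtain ⟨Δ, -, hthm, hmp⟩ := hproto
  obtain ⟨ψ, hψ, hnot⟩ := exists_not_deriv_empty_of_nontrivial hnt hmp
  by_contra! hL
  -- with connectives of arity at most one, `ψ` has at most one variable `m`, so `ψ = ψ(m, m)`
  obtain ⟨X, hX⟩ : ∃ X, ψ.substConst X = ψ := by
    rcases (Fm.vars_subsingleton hL ψ).eq_empty_or_singleton with hv | ⟨m, hm⟩
    · exact ⟨.var 0, Fm.substConst_eq_self hv _⟩
    · exact ⟨.var m, Fm.subst_eq_self fun n hn => by rw [hm] at hn; rw [hn]⟩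
  exact hnot (hX ▸ deriv_substConst_of_deriv_subst1 (hthm ψ hψ) X)

end Protoalgebraic

section Necessity

variable {L : Sig} {ℒ : Logic L} {τ : Set (Fm L × Fm L)} {K : Set (Alg L)}

theorem IsTauAlgSem.exists_ne (hnt : NontrivialLogic ℒ) (hsem : IsTauAlgSem ℒ τ K) :
    ∃ p ∈ τ, p.1 ≠ p.2 := by
  by_contra! h
  refine hnt ((hsem.2 _ _).2 ?_)
  rintro _ ⟨p, hp, rfl⟩ A _ w _
  simp only [h p hp]

theorem IsTauAlgSem.deriv_of_eval_eq (hsem : IsTauAlgSem ℒ τ K) {X Y : Fm L}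
    (h : ∀ A ∈ K, ∀ w, X.eval A w = Y.eval A w) : ℒ.deriv {X} Y := by
  refine (hsem.2 _ _).2 ?_
  rintro _ ⟨p, hp, rfl⟩ A hA w hw
  have hX := hw _ (Set.mem_biUnion rfl ⟨p, hp, rfl⟩)
  rwa [Fm.eval_subst1_congr A (h A hA w), Fm.eval_subst1_congr A (h A hA w)] at hX

theorem exists_ne_logEquiv_of_hasAlgSem (hnt : NontrivialLogic ℒ) {θ : Fm L}
    (hθ : ℒ.deriv ∅ θ) (hθv : θ.vars.Nonempty) (hsem : HasAlgSem ℒ) :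
    ∃ ε δ : Fm L, ε ≠ δ ∧ LogEquiv ℒ ε δ := by
  obtain ⟨τ, K, hsem⟩ := hsem
  obtain ⟨p, hp, hne⟩ := hsem.exists_ne hnt
  obtain ⟨hp₁, hp₂⟩ := hsem.1 p hp
  have hK : ∀ A ∈ K, ∀ w, (Fm.subst1 0 θ p.1).eval A w = (Fm.subst1 0 θ p.2).eval A w :=
    fun A hA w => (hsem.2 ∅ θ).1 hθ _ ⟨p, hp, rfl⟩ A hA w (by simp [tauAppSet])
  refine ⟨Fm.subst1 0 θ p.1, Fm.subst1 0 θ p.2, fun h => ?_, fun φ v => ⟨?_, ?_⟩⟩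
  · rw [Fm.subst1_eq_substConst hp₁, Fm.subst1_eq_substConst hp₂] at h
    exact hθv.ne_empty (Fm.vars_eq_empty_and_size_le_of_substConst_eq hp₁ hp₂ hne h).1
  · exact hsem.deriv_of_eval_eq fun A hA w => Fm.eval_subst1_congr A (hK A hA w) v φ
  · exact hsem.deriv_of_eval_eq fun A hA w => Fm.eval_subst1_congr A (hK A hA w).symm v φ

end Necessity

section RewriteAlgebra

variable {L : Sig} (P Q : Fm L) (T : Set (Fm L))

open Classical in
noncomputable def rewriteRoot (t : Fm L) : Fm L :=
  if h : ∃ c ∈ T, t = P.substConst c then Q.substConst h.choose else t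

noncomputable abbrev rewriteAlg : Alg L where
  carrier := Fm L
  interp g as := rewriteRoot P Q T (.op g as)

variable {P Q T}

theorem rewriteRoot_of_forall_ne {t : Fm L} (h : ∀ c ∈ T, t ≠ P.substConst c) :
    rewriteRoot P Q T t = t :=
  dif_neg fun ⟨c, hc, ht⟩ => h c hc ht

theorem rewriteRoot_substConst (hP : Function.Injective P.substConst) {c : Fm L} (hc : c ∈ T) :
    rewriteRoot P Q T (P.substConst c) = Q.substConst c := by
  have h : ∃ c' ∈ T, P.substConst c = P.substConst c' := ⟨c, hc, rfl⟩
  rw [rewriteRoot, dif_pos h, ← hP h.choose_spec.2]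

theorem logEquiv_rewriteRoot {ℒ : Logic L} (hPQ : LogEquiv ℒ P Q) (t : Fm L) :
    LogEquiv ℒ t (rewriteRoot P Q T t) := by
  unfold rewriteRoot
  split_ifs with h
  · have hc : LogEquiv ℒ (P.substConst h.choose) (Q.substConst h.choose) := hPQ.subst _
    rwa [← h.choose_spec.2] at hc
  · exact .refl t

theorem logEquiv_eval_rewriteAlg {ℒ : Logic L} (hPQ : LogEquiv ℒ P Q) (u : ℕ → Fm L) :
    ∀ t : Fm L, LogEquiv ℒ (t.subst u) (t.eval (rewriteAlg P Q T) u)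
  | .var _ => .refl _
  | .op _ ss => (LogEquiv.op fun i => logEquiv_eval_rewriteAlg hPQ u (ss i)).trans
      (logEquiv_rewriteRoot hPQ _)

theorem eval_rewriteAlg_op {u : ℕ → Fm L} {g : L.Op} {ss : Fin (L.ar g) → Fm L}
    (h : ∀ i, (ss i).eval (rewriteAlg P Q T) u = (ss i).subst u) :
    (Fm.op g ss).eval (rewriteAlg P Q T) u = rewriteRoot P Q T ((Fm.op g ss).subst u) := by
  simp only [Fm.eval, Fm.subst, h]

end RewriteAlgebra

section Pattern

variable {L : Sig} (f : L.Op)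

/-- `f(p, q, r, …, r)`. -/
def triple (p q r : Fm L) : Fm L :=
  .op f fun i => if i.val = 0 then p else if i.val = 1 then q else r

def tower : ℕ → Fm L
  | 0 => .var 0
  | j + 1 => .op f fun _ => tower j

variable (e d : Fm L)

def ruleBase : Fm L :=
  tower f (triple f e d d).size

def ruleLhs : Fm L :=
  triple f (ruleBase f e d) ((triple f e d d).substConst (ruleBase f e d))
    ((triple f e d d).substConst (ruleBase f e d))

def ruleRhs : Fm L :=
  triple f (ruleBase f e d) ((triple f d e d).substConst (ruleBase f e d))
    ((triple f e d d).substConst (ruleBase f e d))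

noncomputable abbrev ruleAlg (T : Set (Fm L)) : Alg L :=
  rewriteAlg (ruleLhs f e d) (ruleRhs f e d) T

def IsSmall (t : Fm L) : Prop :=
  t.size ≤ max e.size d.size ∧ t.varOccs ≤ (triple f e d d).varOccs

variable {f e d} {p q r : Fm L}

theorem triple_substConst (X : Fm L) :
    (triple f p q r).substConst X =
      triple f (p.substConst X) (q.substConst X) (r.substConst X) := by
  simp only [triple, Fm.substConst_op]
  congr 1
  funext i
  split_ifs <;> rfl

theorem vars_triple_subset : (triple f p q r).vars ⊆ p.vars ∪ q.vars ∪ r.vars := by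
  intro k hk
  obtain ⟨i, hi⟩ := Set.mem_iUnion.1 hk
  dsimp only at hi
  split_ifs at hi <;> simp [hi]

variable (hf : 2 ≤ L.ar f)
include hf

theorem exists_eq_of_op_eq_triple {g : L.Op} {xs : Fin (L.ar g) → Fm L}
    (h : Fm.op g xs = triple f p q r) : (∃ i, xs i = p) ∧ ∃ i, xs i = q := by
  simp only [triple, Fm.op.injEq] at h
  obtain ⟨rfl, h⟩ := h
  rw [eq_of_heq h]
  exact ⟨⟨⟨0, by omega⟩, rfl⟩, ⟨1, by omega⟩, rfl⟩

theorem triple_inj {p' q' r' : Fm L} (h : triple f p q r = triple f p' q' r') :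
    p = p' ∧ q = q' := by
  simp only [triple, Fm.op.injEq, heq_eq_eq, true_and] at h
  exact ⟨by simpa using congrFun h ⟨0, by omega⟩,
    by simpa using congrFun h ⟨1, by omega⟩⟩

theorem size_lt_size_triple :
    p.size < (triple f p q r).size ∧ q.size < (triple f p q r).size := by
  have h := Fm.size_lt_size_op (g := f) fun i => if i.val = 0 then p else if i.val = 1 then q else r
  exact ⟨by simpa [triple] using h ⟨0, by omega⟩,
    by simpa [triple] using h ⟨1, by omega⟩⟩

theorem varOccs_le_varOccs_triple :
    p.varOccs ≤ (triple f p q r).varOccs ∧ q.varOccs ≤ (triple f p q r).varOccs := by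
  have h := Fm.varOccs_le_varOccs_op (g := f) fun i =>
    if i.val = 0 then p else if i.val = 1 then q else r
  exact ⟨by simpa [triple] using h ⟨0, by omega⟩,
    by simpa [triple] using h ⟨1, by omega⟩⟩

omit hf in
theorem vars_tower_subset : ∀ j, (tower f j).vars ⊆ {0}
  | 0 => subset_rfl
  | j + 1 => Set.iUnion_subset fun _ => vars_tower_subset j

theorem size_tower_substConst (c : Fm L) : ∀ j, 2 ^ j ≤ ((tower f j).substConst c).size
  | 0 => Fm.one_le_size c
  | j + 1 => by
    have ih := size_tower_substConst c j
    have hsum : ∑ _i : Fin (L.ar f), ((tower f j).substConst c).size =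
        L.ar f * ((tower f j).substConst c).size := by simp
    simp only [tower, Fm.substConst_op, Fm.size, hsum]
    rw [pow_succ]
    nlinarith

theorem tower_substConst_injective : ∀ j, Function.Injective (tower f j).substConst
  | 0 => fun _ _ h => h
  | j + 1 => fun b c h => by
    simp only [tower, Fm.substConst_op, Fm.op.injEq, heq_eq_eq, true_and] at h
    exact tower_substConst_injective j (congrFun h ⟨0, by omega⟩)

end Pattern

section RewritePattern

variable {L : Sig} {f : L.Op} {e d : Fm L}

theorem ruleLhs_substConst (c : Fm L) :
    (ruleLhs f e d).substConst c = triple f ((ruleBase f e d).substConst c)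
      ((triple f e d d).substConst ((ruleBase f e d).substConst c))
      ((triple f e d d).substConst ((ruleBase f e d).substConst c)) := by
  rw [ruleLhs, triple_substConst, Fm.substConst_substConst]

theorem ruleRhs_substConst (c : Fm L) :
    (ruleRhs f e d).substConst c = triple f ((ruleBase f e d).substConst c)
      ((triple f d e d).substConst ((ruleBase f e d).substConst c))
      ((triple f e d d).substConst ((ruleBase f e d).substConst c)) := by
  rw [ruleRhs, triple_substConst, Fm.substConst_substConst, Fm.substConst_substConst]

theorem vars_ruleLhs_subset : (ruleLhs f e d).vars ⊆ {0} := by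
  intro k hk
  rcases vars_triple_subset hk with (hk | hk) | hk <;>
    exact vars_tower_subset _ (by first | exact hk | exact Fm.vars_substConst_subset _ _ hk)

theorem vars_ruleRhs_subset : (ruleRhs f e d).vars ⊆ {0} := by
  intro k hk
  rcases vars_triple_subset hk with (hk | hk) | hk <;>
    exact vars_tower_subset _ (by first | exact hk | exact Fm.vars_substConst_subset _ _ hk)

theorem ruleLhs_logEquiv_ruleRhs {ℒ : Logic L} (h : LogEquiv ℒ e d) :
    LogEquiv ℒ (ruleLhs f e d) (ruleRhs f e d) := by
  have hblock : LogEquiv ℒ (triple f e d d) (triple f d e d) :=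
    LogEquiv.op fun i => by
      split_ifs
      exacts [h, h.symm, .refl d]
  exact LogEquiv.op fun i => by
    split_ifs
    exacts [.refl _, hblock.subst _, .refl _]

variable (hf : 2 ≤ L.ar f)
include hf

theorem max_size_lt_size_triple : max e.size d.size < (triple f e d d).size :=
  max_lt (size_lt_size_triple hf).1 (size_lt_size_triple hf).2

theorem size_triple_lt_size_ruleBase_substConst (c : Fm L) :
    (triple f e d d).size < ((ruleBase f e d).substConst c).size :=
  Nat.lt_two_pow_self.trans_le (size_tower_substConst hf c _)

theorem ruleLhs_substConst_injective : Function.Injective (ruleLhs f e d).substConst :=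
  fun b c h => by
    rw [ruleLhs_substConst, ruleLhs_substConst] at h
    exact tower_substConst_injective hf _ (triple_inj hf h).1

theorem ruleRhs_substConst_ne (he : e.vars ⊆ {0}) (hd : d.vars ⊆ {0}) (hne : e ≠ d)
    (b c : Fm L) : (ruleRhs f e d).substConst b ≠ (ruleLhs f e d).substConst c := by
  intro h
  rw [ruleRhs_substConst, ruleLhs_substConst] at h
  obtain ⟨hbc, h⟩ := triple_inj hf h
  rw [← hbc, triple_substConst, triple_substConst] at h
  have hsize := (Fm.vars_eq_empty_and_size_le_of_substConst_eq he hd hne (triple_inj hf h).1.symm).2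
  exact hsize.not_gt ((max_size_lt_size_triple hf).trans
    (size_triple_lt_size_ruleBase_substConst hf b))

theorem tower_step_ne_ruleLhs_substConst (Y c : Fm L) :
    Fm.op f (fun _ => Y) ≠ (ruleLhs f e d).substConst c := by
  intro h
  rw [ruleLhs_substConst] at h
  obtain ⟨⟨_, rfl⟩, ⟨_, h⟩⟩ := exists_eq_of_op_eq_triple hf h
  exact (size_triple_lt_size_ruleBase_substConst hf c).ne
    (congrArg Fm.size (Fm.eq_of_substConst_op_eq_self h.symm).2).symm

theorem isSmall_left : IsSmall f e d e :=
  ⟨le_max_left _ _, (varOccs_le_varOccs_triple hf).1⟩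

theorem isSmall_right : IsSmall f e d d :=
  ⟨le_max_right _ _, (varOccs_le_varOccs_triple hf).2⟩

/-- The first argument `B(c)` of `ruleLhs(c)` is too large to be an instance of a variable-free
small `s₀`; if `s₀` has variables, `|β| ≤ |B(c)|`, and counting sizes makes the second argument
`M(B(c))` too large to be an instance of a small `s₁`. -/
theorem substConst_ne_ruleLhs_substConst_of_small {g : L.Op} {ss : Fin (L.ar g) → Fm L}
    (hs : ∀ i, IsSmall f e d (ss i)) (b c : Fm L) :
    (Fm.op g ss).substConst ((ruleBase f e d).substConst b) ≠ (ruleLhs f e d).substConst c := by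
  set β := (ruleBase f e d).substConst b
  set γ := (ruleBase f e d).substConst c
  intro h
  rw [ruleLhs_substConst, Fm.substConst_op] at h
  obtain ⟨⟨i, hi⟩, ⟨j, hj⟩⟩ := exists_eq_of_op_eq_triple hf h
  have hγ := size_triple_lt_size_ruleBase_substConst hf (e := e) (d := d) c
  have hK := max_size_lt_size_triple hf (e := e) (d := d)
  by_cases h0 : (ss i).varOccs = 0
  · rw [Fm.substConst_eq_self (Fm.varOccs_eq_zero_iff.1 h0)] at hi
    have := (hs i).1
    rw [hi] at this
    omega
  · have hβγ : β.size ≤ γ.size := by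
      have := Fm.size_le_size_substConst h0 β
      rwa [hi] at this
    have e1 := Fm.size_substConst γ (triple f e d d)
    have e2 := Fm.size_substConst β (ss j)
    rw [hj] at e2
    nlinarith [(hs j).1, (hs j).2, Fm.one_le_size β,
      Nat.mul_le_mul_left (triple f e d d).varOccs hβγ]

end RewritePattern

section RewritePatternEval

variable {L : Sig} {f : L.Op} {e d : Fm L} (hf : 2 ≤ L.ar f) (T : Set (Fm L))
include hf

theorem eval_tower (b : Fm L) : ∀ j,
    (tower f j).eval (ruleAlg f e d T) (fun _ => b) = (tower f j).substConst b
  | 0 => rfl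
  | j + 1 => (eval_rewriteAlg_op fun _ => eval_tower b j).trans
      (rewriteRoot_of_forall_ne fun c _ => tower_step_ne_ruleLhs_substConst hf _ c)

theorem eval_op_of_small {b : Fm L} {g : L.Op} {ss : Fin (L.ar g) → Fm L}
    (hs : ∀ i, IsSmall f e d (ss i))
    (hss : ∀ i, (ss i).eval (ruleAlg f e d T) (fun _ => (ruleBase f e d).substConst b) =
      (ss i).substConst ((ruleBase f e d).substConst b)) :
    (Fm.op g ss).eval (ruleAlg f e d T) (fun _ => (ruleBase f e d).substConst b) =
      (Fm.op g ss).substConst ((ruleBase f e d).substConst b) :=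
  (eval_rewriteAlg_op hss).trans
    (rewriteRoot_of_forall_ne fun c _ => substConst_ne_ruleLhs_substConst_of_small hf hs b c)

theorem eval_of_small (b : Fm L) : ∀ t : Fm L, IsSmall f e d t →
    t.eval (ruleAlg f e d T) (fun _ => (ruleBase f e d).substConst b) =
      t.substConst ((ruleBase f e d).substConst b)
  | .var _, _ => rfl
  | .op _ ss, ht =>
    have hs i : IsSmall f e d (ss i) :=
      ⟨(Fm.size_lt_size_op ss i).le.trans ht.1, (Fm.varOccs_le_varOccs_op ss i).trans ht.2⟩
    eval_op_of_small hf T hs fun i => eval_of_small b (ss i) (hs i)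

theorem eval_triple_substConst_ruleBase {x y : Fm L} (hx : IsSmall f e d x)
    (hy : IsSmall f e d y) (b : Fm L) :
    ((triple f x y d).substConst (ruleBase f e d)).eval (ruleAlg f e d T) (fun _ => b) =
      ((triple f x y d).substConst (ruleBase f e d)).substConst b := by
  have hs : ∀ i : Fin (L.ar f),
      IsSmall f e d (if i.val = 0 then x else if i.val = 1 then y else d) := by
    intro i
    split_ifs
    exacts [hx, hy, isSmall_right hf]
  have hB : (ruleBase f e d).eval (ruleAlg f e d T) (fun _ => b) =
      (ruleBase f e d).substConst b := eval_tower hf T b _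
  refine (Fm.eval_subst _ _ _ _).trans ?_
  rw [hB, Fm.substConst_substConst]
  exact eval_op_of_small hf T hs fun i => eval_of_small hf T b _ (hs i)

/-- Evaluated at any `b`, `ruleRhs` is left unchanged, while `ruleLhs` is rewritten exactly when
`b ∈ T`. -/
theorem eval_ruleRhs_eq_eval_ruleLhs_iff (he : e.vars ⊆ {0}) (hd : d.vars ⊆ {0}) (hne : e ≠ d)
    (b : Fm L) :
    (ruleRhs f e d).eval (ruleAlg f e d T) (fun _ => b) =
      (ruleLhs f e d).eval (ruleAlg f e d T) (fun _ => b) ↔ b ∈ T := by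
  have he' := isSmall_left hf (e := e) (d := d)
  have hd' := isSmall_right hf (e := e) (d := d)
  have hQ : (ruleRhs f e d).eval (ruleAlg f e d T) (fun _ => b) =
      (ruleRhs f e d).substConst b := by
    refine (eval_rewriteAlg_op fun i => ?_).trans
      (rewriteRoot_of_forall_ne fun c _ => ruleRhs_substConst_ne hf he hd hne b c)
    split_ifs
    exacts [eval_tower hf T b _, eval_triple_substConst_ruleBase hf T hd' he' b,
      eval_triple_substConst_ruleBase hf T he' hd' b]
  have hP : (ruleLhs f e d).eval (ruleAlg f e d T) (fun _ => b) =
      rewriteRoot (ruleLhs f e d) (ruleRhs f e d) T ((ruleLhs f e d).substConst b) := by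
    refine eval_rewriteAlg_op fun i => ?_
    split_ifs
    exacts [eval_tower hf T b _, eval_triple_substConst_ruleBase hf T he' hd' b,
      eval_triple_substConst_ruleBase hf T he' hd' b]
  rw [hQ, hP]
  by_cases hb : b ∈ T
  · rw [rewriteRoot_substConst (ruleLhs_substConst_injective hf) hb]
    exact iff_of_true rfl hb
  · rw [rewriteRoot_of_forall_ne fun c hc h => hb (by rwa [ruleLhs_substConst_injective hf h])]
    exact iff_of_false (ruleRhs_substConst_ne hf he hd hne b b) hb

end RewritePatternEval

section Sufficiency

variable {L : Sig} {ℒ : Logic L} {f : L.Op} {e d : Fm L}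

theorem eval_subst1_ruleRhs_eq_iff (hf : 2 ≤ L.ar f) (he : e.vars ⊆ {0}) (hd : d.vars ⊆ {0})
    (hne : e ≠ d) (heqv : LogEquiv ℒ e d) {T : Set (Fm L)} (hT : ℒ.IsTheory T)
    (v : ℕ → Fm L) (φ : Fm L) :
    (Fm.subst1 0 φ (ruleRhs f e d)).eval (ruleAlg f e d T) v =
      (Fm.subst1 0 φ (ruleLhs f e d)).eval (ruleAlg f e d T) v ↔
        φ.subst v ∈ T := by
  rw [Fm.eval_subst1_of_vars_subset vars_ruleRhs_subset,
    Fm.eval_subst1_of_vars_subset vars_ruleLhs_subset,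
    eval_ruleRhs_eq_eval_ruleLhs_iff hf T he hd hne]
  have h := logEquiv_eval_rewriteAlg (T := T) (ruleLhs_logEquiv_ruleRhs (f := f) heqv) v φ
  exact ⟨hT.mem_of_logEquiv h.symm, hT.mem_of_logEquiv h⟩

theorem isTauAlgSem_rewriteAlg (hf : 2 ≤ L.ar f) (he : e.vars ⊆ {0}) (hd : d.vars ⊆ {0})
    (hne : e ≠ d) (heqv : LogEquiv ℒ e d) :
    IsTauAlgSem ℒ {(ruleRhs f e d, ruleLhs f e d)}
      {A | ∃ T, ℒ.IsTheory T ∧ A = ruleAlg f e d T} := by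
  refine ⟨fun _ h =>
    (Set.mem_singleton_iff.1 h) ▸ ⟨vars_ruleRhs_subset, vars_ruleLhs_subset⟩,
    fun Γ φ => ⟨?_, fun h => ?_⟩⟩
  · rintro hΓφ _ ⟨_, rfl, rfl⟩ _ ⟨T, hT, rfl⟩ v hv
    have key := eval_subst1_ruleRhs_eq_iff hf he hd hne heqv hT v
    refine (key φ).2 (hT _ (ℒ.cut _ _ _ (ℒ.substInv v Γ φ hΓφ) ?_))
    rintro _ ⟨γ, hγ, rfl⟩
    exact ℒ.axm _ _ ((key γ).1 (hv _ (Set.mem_biUnion hγ ⟨_, rfl, rfl⟩)))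
  · have hT : ℒ.IsTheory {χ | ℒ.deriv Γ χ} := fun χ hχ => ℒ.cut _ _ _ hχ fun _ h => h
    have key := eval_subst1_ruleRhs_eq_iff hf he hd hne heqv hT Fm.var
    have hφ := h _ ⟨_, rfl, rfl⟩ _ ⟨_, hT, rfl⟩ Fm.var fun p hp => by
      obtain ⟨γ, hγ, _, rfl, rfl⟩ := Set.mem_iUnion₂.1 hp
      exact (key γ).2 (by rw [Fm.subst_var]; exact ℒ.axm _ _ hγ)
    have hφ' := (key φ).1 hφ
    rw [Fm.subst_var] at hφ'
    exact hφ'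

theorem hasAlgSem_of_exists_ne_logEquiv (hf : 2 ≤ L.ar f)
    (h : ∃ ε δ : Fm L, ε ≠ δ ∧ LogEquiv ℒ ε δ) : HasAlgSem ℒ := by
  obtain ⟨ε, δ, hne, heqv⟩ := h
  obtain ⟨m, hm⟩ := Fm.exists_subst_ne (t := tower f 1) nofun hne
  have hunary : ∀ t : Fm L, (t.subst fun n => if n = m then tower f 1 else .var 0).vars ⊆ {0} :=
    Fm.vars_subst_subset fun n => by
      split_ifs
      exacts [vars_tower_subset 1, subset_rfl]
  exact ⟨_, _, isTauAlgSem_rewriteAlg hf (hunary ε) (hunary δ) hm (heqv.subst _)⟩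

end Sufficiency

/-- A nontrivial protoalgebraic logic has an algebraic semantics iff it has two distinct
logically equivalent formulas. -/
theorem protoalgebraic_alg_sem_iff {L : Sig} (ℒ : Logic L)
    (hnt : NontrivialLogic ℒ) (hproto : Protoalgebraic ℒ) :
    HasAlgSem ℒ ↔ ∃ ε δ : Fm L, ε ≠ δ ∧ LogEquiv ℒ ε δ := by
  obtain ⟨θ, hθ, hθv⟩ := hproto.exists_deriv_vars_nonempty hnt
  obtain ⟨f, hf⟩ := hproto.exists_two_le_ar hnt
  exact ⟨exists_ne_logEquiv_of_hasAlgSem hnt hθ hθv, hasAlgSem_of_exists_ne_logEquiv hf⟩
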